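/- Let f ∈ L_p[0,1] (1 ≤ p < ∞) be self-similar of zero spectral order with |d_{k̂}| < 1 and singular point x̂ = α_{k̂}/(1−a_{k̂}). Then f is essentially bounded on [0,1], and the essential limit of f at x̂ exists and equals β_{k̂}/(1 − d_{k̂}): for every ε > 0 there is δ > 0 such that |f(x) − β_{k̂}/(1 − d_{k̂})| < ε for almost every x ∈ [0,1] with 0 < |x − x̂| < δ. -/

import Mathlib

open MeasureTheory Set Filter
open scoped ENNReal NNReal

/-- Breakpoints: `alphaOf a k = α_k = ∑_{i=1}^{k-1} a_i`, so `α_1 = 0`. -/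
noncomputable def alphaOf (a : ℕ → ℝ) (k : ℕ) : ℝ := ∑ i ∈ Finset.Ico 1 k, a i

/-- The similarity operator `G`: on `(α_k, α_{k+1})` it takes the value
`β_k + d_k · f((x − α_k)/a_k)`, and `0` outside `⋃ (α_k, α_{k+1})`. -/
noncomputable def simOp (n : ℕ) (a d β : ℕ → ℝ) (f : ℝ → ℝ) : ℝ → ℝ :=
  fun x => ∑ k ∈ Finset.Icc 1 n,
    Set.indicator (Set.Ioo (alphaOf a k) (alphaOf a (k + 1)))
      (fun y => β k + d k * f ((y - alphaOf a k) / a k)) x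

/-!
Only the `k̂`-th branch of `G` is non-constant; it maps `[0, 1]` onto the block
`[α_k̂, α_{k̂+1}]` through the similarity `φ y = α_k̂ + a_k̂ y`, whose fixed point is `x̂`.
Iterating it produces nested intervals `Iₘ` shrinking to `x̂`, with `I₀ = [0, 1]`.
Off `I₁` the function `f` takes one of the values `β_j`, and on `I₁`, with
`L = β_k̂ / (1 - d_k̂)`, the fixed-point equation reads `f - L = d_k̂ (f ∘ φ⁻¹ - L)`.
By induction `|f - L| ≤ |d_k̂|^m C` a.e. on `Iₘ \ Iₘ₊₁`, and these rings cover `[0, 1] \ {x̂}`;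
this gives both the essential bound and the essential limit `L` at `x̂`.
-/

open Topology

lemma exists_mem_Ico_of_le_of_lt {α : Type*} [LinearOrder α] (u : ℕ → α) {x : α} :
    ∀ {n : ℕ}, u 1 ≤ x → x < u (n + 1) → ∃ j ∈ Finset.Icc 1 n, x ∈ Ico (u j) (u (j + 1))
  | 0, h₁, h₂ => absurd h₁ (not_le.mpr h₂)
  | n + 1, h₁, h₂ => by
    by_cases hx : x < u (n + 1)
    · obtain ⟨j, hj, hxj⟩ := exists_mem_Ico_of_le_of_lt u h₁ hx
      exact ⟨j, Finset.Icc_subset_Icc_right n.le_succ hj, hxj⟩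
    · exact ⟨n + 1, Finset.mem_Icc.mpr ⟨Nat.le_add_left 1 n, le_rfl⟩, not_lt.mp hx, h₂⟩

lemma Antitone.exists_le_mem_sdiff_succ {α : Type*} {s : ℕ → Set α} (hs : Antitone s)
    {x : α} {m₀ : ℕ} (hx : x ∈ s m₀) (h : ∃ m, x ∉ s m) :
    ∃ m, m₀ ≤ m ∧ x ∈ s m \ s (m + 1) := by
  classical
  have hlt : m₀ < Nat.find h := lt_of_not_ge fun hle => Nat.find_spec h (hs hle hx)
  refine ⟨Nat.find h - 1, by omega, ?_, ?_⟩
  · simpa using Nat.find_min h (m := Nat.find h - 1) (by omega)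
  · rw [Nat.sub_add_cancel (by omega)]
    exact Nat.find_spec h

lemma ae_comp_sub_div {A c : ℝ} (hA : A ≠ 0) {P : ℝ → Prop} (h : ∀ᵐ y, P y) :
    ∀ᵐ x, P ((x - c) / A) := by
  simpa [div_eq_inv_mul] using ((Measure.quasiMeasurePreserving_smul volume (inv_ne_zero hA)).comp
    (measurePreserving_sub_right volume c).quasiMeasurePreserving).ae h

section NestedIcc

variable {A c x : ℝ} {m : ℕ}

/-- The image of `[0, 1]` under the `m`-th iterate of the similarity `y ↦ c + A (y - c)`. -/
def nestedIcc (A c : ℝ) (m : ℕ) : Set ℝ := Icc (c - A ^ m * c) (c + A ^ m * (1 - c))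

@[simp]
lemma nestedIcc_zero : nestedIcc A c 0 = Icc 0 1 := by
  simp [nestedIcc]

lemma mem_nestedIcc_succ_iff (hA : 0 < A) :
    x ∈ nestedIcc A c (m + 1) ↔ (x - c * (1 - A)) / A ∈ nestedIcc A c m := by
  simp only [nestedIcc, mem_Icc, le_div_iff₀ hA, div_le_iff₀ hA, pow_succ]
  constructor <;> rintro ⟨h₁, h₂⟩ <;> constructor <;> linarith

lemma nestedIcc_antitone (hA₀ : 0 ≤ A) (hA₁ : A ≤ 1) (hc : c ∈ Icc 0 1) :
    Antitone (nestedIcc A c) := by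
  intro i j hij
  have := pow_le_pow_of_le_one hA₀ hA₁ hij
  exact Icc_subset_Icc (by nlinarith [hc.1]) (by nlinarith [hc.2])

lemma exists_notMem_nestedIcc (hA₁ : A < 1) (hc : c ∈ Icc 0 1) (hx : x ≠ c) :
    ∃ m, x ∉ nestedIcc A c m := by
  obtain ⟨m, hm⟩ := exists_pow_lt_of_lt_one (abs_sub_pos.mpr hx) hA₁
  refine ⟨m, fun ⟨h₁, h₂⟩ => hm.not_ge (abs_le.mpr ⟨?_, ?_⟩)⟩ <;>
    nlinarith [hc.1, hc.2]

lemma nestedIcc_mem_nhdsWithin (hA : 0 < A) (hc : c ∈ Icc 0 1) (m : ℕ) :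
    nestedIcc A c m ∈ 𝓝[Icc 0 1] c := by
  have hAm : 0 < A ^ m := pow_pos hA m
  have hlo : ∀ᶠ y in 𝓝[Icc 0 1] c, c - A ^ m * c ≤ y := by
    rcases hc.1.eq_or_lt with h | h
    · filter_upwards [self_mem_nhdsWithin] with y hy
      simpa [← h] using hy.1
    · exact mem_nhdsWithin_of_mem_nhds (Ici_mem_nhds (by nlinarith))
  have hhi : ∀ᶠ y in 𝓝[Icc 0 1] c, y ≤ c + A ^ m * (1 - c) := by
    rcases hc.2.eq_or_lt with h | h
    · filter_upwards [self_mem_nhdsWithin] with y hy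
      simpa [h] using hy.2
    · exact mem_nhdsWithin_of_mem_nhds (Iic_mem_nhds (by nlinarith))
  exact hlo.and hhi

variable {g : ℝ → ℝ} {D C : ℝ}

theorem ae_abs_le_of_mem_nestedIcc_sdiff (hA₀ : 0 < A) (hA₁ : A ≤ 1) (hc : c ∈ Icc 0 1)
    (hout : ∀ᵐ x, x ∈ Icc 0 1 \ nestedIcc A c 1 → |g x| ≤ C)
    (hself : ∀ᵐ x, x ∈ nestedIcc A c 1 → g x = D * g ((x - c * (1 - A)) / A)) :
    ∀ m : ℕ, ∀ᵐ x, x ∈ nestedIcc A c m \ nestedIcc A c (m + 1) → |g x| ≤ |D| ^ m * C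
  | 0 => by simpa using hout
  | m + 1 => by
    filter_upwards [ae_comp_sub_div hA₀.ne'
      (ae_abs_le_of_mem_nestedIcc_sdiff hA₀ hA₁ hc hout hself m), hself]
      with x hx hxself ⟨hxm, hxm'⟩
    have hx₁ : x ∈ nestedIcc A c 1 := nestedIcc_antitone hA₀.le hA₁ hc (by omega) hxm
    rw [hxself hx₁, abs_mul, pow_succ', mul_assoc]
    refine mul_le_mul_of_nonneg_left (hx ⟨?_, ?_⟩) (abs_nonneg D)
    · exact (mem_nestedIcc_succ_iff hA₀).mp hxm
    · exact fun h => hxm' ((mem_nestedIcc_succ_iff hA₀).mpr h)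

theorem ae_abs_le_of_mem_nestedIcc (hA₀ : 0 < A) (hA₁ : A < 1) (hc : c ∈ Icc 0 1)
    (hD : |D| ≤ 1) (hC : 0 ≤ C)
    (hout : ∀ᵐ x, x ∈ Icc 0 1 \ nestedIcc A c 1 → |g x| ≤ C)
    (hself : ∀ᵐ x, x ∈ nestedIcc A c 1 → g x = D * g ((x - c * (1 - A)) / A)) :
    ∀ᵐ x, ∀ m, x ∈ nestedIcc A c m → x ≠ c → |g x| ≤ |D| ^ m * C := by
  filter_upwards [ae_all_iff.mpr (ae_abs_le_of_mem_nestedIcc_sdiff hA₀ hA₁.le hc hout hself)]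
    with x hx m hxm hxc
  obtain ⟨m', hmm', hxm'⟩ := (nestedIcc_antitone hA₀.le hA₁.le hc).exists_le_mem_sdiff_succ hxm
    (exists_notMem_nestedIcc hA₁ hc hxc)
  exact (hx m' hxm').trans
    (mul_le_mul_of_nonneg_right (pow_le_pow_of_le_one (abs_nonneg D) hD hmm') hC)

theorem ae_restrict_Icc_abs_le_of_mem_nestedIcc
    (hg : ∀ᵐ x, ∀ m, x ∈ nestedIcc A c m → x ≠ c → |g x| ≤ |D| ^ m * C) :
    ∀ᵐ x ∂volume.restrict (Icc 0 1), |g x| ≤ C := by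
  filter_upwards [ae_restrict_of_ae hg, ae_restrict_mem measurableSet_Icc, Measure.ae_ne _ c]
    with x hx hx₀₁ hxc
  simpa using hx 0 (by simpa using hx₀₁) hxc

theorem essLimit_eq_zero_of_mem_nestedIcc (hA : 0 < A) (hc : c ∈ Icc 0 1) (hD : |D| < 1)
    (hg : ∀ᵐ x, ∀ m, x ∈ nestedIcc A c m → x ≠ c → |g x| ≤ |D| ^ m * C) :
    ∀ ε > 0, ∃ δ > 0, ∀ᵐ x ∂volume.restrict (Icc 0 1),
      (0 < |x - c| ∧ |x - c| < δ) → |g x| < ε := by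
  intro ε hε
  have hdecay : Tendsto (fun m : ℕ => |D| ^ m * C) atTop (𝓝 0) := by
    simpa using (tendsto_pow_atTop_nhds_zero_of_lt_one (abs_nonneg D) hD).mul_const C
  obtain ⟨m, hm⟩ := (hdecay.eventually (gt_mem_nhds hε)).exists
  obtain ⟨δ, hδ, hball⟩ := Metric.mem_nhdsWithin_iff.mp (nestedIcc_mem_nhdsWithin hA hc m)
  refine ⟨δ, hδ, ?_⟩
  filter_upwards [ae_restrict_of_ae hg, ae_restrict_mem measurableSet_Icc]
    with x hx hx₀₁ ⟨hxc, hxδ⟩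
  have hxm : x ∈ nestedIcc A c m := hball ⟨by rwa [Metric.mem_ball, Real.dist_eq], hx₀₁⟩
  exact (hx m hxm (sub_ne_zero.mp (abs_pos.mp hxc))).trans_lt hm

end NestedIcc

section SimilarityOperator

variable {n : ℕ} {a d β : ℕ → ℝ} {f : ℝ → ℝ}

lemma alphaOf_one : alphaOf a 1 = 0 := by
  simp [alphaOf]

lemma alphaOf_succ {j : ℕ} (hj : 1 ≤ j) : alphaOf a (j + 1) = alphaOf a j + a j :=
  Finset.sum_Ico_succ_top hj a

lemma alphaOf_mono (ha : ∀ k ∈ Finset.Icc 1 n, 0 < a k) {i j : ℕ} (hij : i ≤ j)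
    (hj : j ≤ n + 1) : alphaOf a i ≤ alphaOf a j := by
  refine Finset.sum_le_sum_of_subset_of_nonneg (Finset.Ico_subset_Ico le_rfl hij) ?_
  intro k hk _
  have := Finset.mem_Ico.mp hk
  exact (ha k (Finset.mem_Icc.mpr ⟨this.1, by omega⟩)).le

lemma alphaOf_add_one_eq_one (hsum : ∑ k ∈ Finset.Icc 1 n, a k = 1) : alphaOf a (n + 1) = 1 := by
  rw [alphaOf, Finset.Ico_add_one_right_eq_Icc, hsum]

lemma alphaOf_mem_Icc (ha : ∀ k ∈ Finset.Icc 1 n, 0 < a k)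
    (hsum : ∑ k ∈ Finset.Icc 1 n, a k = 1) {j : ℕ} (hj₁ : 1 ≤ j) (hj : j ≤ n + 1) :
    alphaOf a j ∈ Icc 0 1 :=
  ⟨alphaOf_one (a := a) ▸ alphaOf_mono ha hj₁ hj,
    alphaOf_add_one_eq_one hsum ▸ alphaOf_mono ha hj le_rfl⟩

lemma Icc_alphaOf_eq_nestedIcc {k : ℕ} (hk : 1 ≤ k) {c : ℝ} (hα : alphaOf a k = c * (1 - a k)) :
    Icc (alphaOf a k) (alphaOf a (k + 1)) = nestedIcc (a k) c 1 := by
  rw [alphaOf_succ hk, hα, nestedIcc]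
  congr 1 <;> ring

lemma lt_one_of_sum_eq_one (hn : 1 < n) (ha : ∀ k ∈ Finset.Icc 1 n, 0 < a k)
    (hsum : ∑ k ∈ Finset.Icc 1 n, a k = 1) {k : ℕ} (hk : k ∈ Finset.Icc 1 n) : a k < 1 := by
  obtain ⟨j, hj, hjk⟩ : ∃ j ∈ Finset.Icc 1 n, j ≠ k :=
    Finset.exists_mem_ne (by simpa using hn) k
  exact hsum ▸ Finset.single_lt_sum hjk hk hj (ha j hj) fun i hi _ => (ha i hi).le

lemma simOp_eq_of_mem_Ioo (ha : ∀ k ∈ Finset.Icc 1 n, 0 < a k) {j : ℕ}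
    (hj : j ∈ Finset.Icc 1 n) {x : ℝ} (hx : x ∈ Ioo (alphaOf a j) (alphaOf a (j + 1))) :
    simOp n a d β f x = β j + d j * f ((x - alphaOf a j) / a j) := by
  rw [simOp, Finset.sum_eq_single_of_mem j hj, indicator_of_mem hx]
  intro k hk hkj
  refine indicator_of_notMem (fun hxk => ?_) _
  obtain ⟨hk₁, hkn⟩ := Finset.mem_Icc.mp hk
  obtain ⟨hj₁, hjn⟩ := Finset.mem_Icc.mp hj
  rcases hkj.lt_or_gt with h | h
  · linarith [alphaOf_mono ha (show k + 1 ≤ j by omega) (by omega), hxk.2, hx.1]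
  · linarith [alphaOf_mono ha (show j + 1 ≤ k by omega) (by omega), hxk.1, hx.2]

lemma ae_exists_mem_Ioo_alphaOf (hsum : ∑ k ∈ Finset.Icc 1 n, a k = 1) :
    ∀ᵐ x, x ∈ Icc 0 1 → ∃ j ∈ Finset.Icc 1 n, x ∈ Ioo (alphaOf a j) (alphaOf a (j + 1)) := by
  filter_upwards [((finite_Icc 1 (n + 1)).image (alphaOf a)).countable.ae_notMem volume]
    with x hx hx₀₁
  have hne : ∀ j ∈ Icc 1 (n + 1), alphaOf a j ≠ x := fun j hj h => hx ⟨j, hj, h⟩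
  have hlt : x < alphaOf a (n + 1) := by
    have := hne (n + 1) ⟨by omega, le_rfl⟩
    rw [alphaOf_add_one_eq_one hsum] at this ⊢
    exact hx₀₁.2.lt_of_ne this.symm
  obtain ⟨j, hj, hxj⟩ := exists_mem_Ico_of_le_of_lt (alphaOf a) (alphaOf_one ▸ hx₀₁.1) hlt
  have hj' : j ∈ Icc 1 (n + 1) := ⟨(Finset.mem_Icc.mp hj).1, by grind⟩
  exact ⟨j, hj, hxj.1.lt_of_ne (hne j hj'), hxj.2⟩

lemma ae_abs_sub_le_of_notMem_Icc_alphaOf (ha : ∀ k ∈ Finset.Icc 1 n, 0 < a k)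
    (hsum : ∑ k ∈ Finset.Icc 1 n, a k = 1) {khat : ℕ}
    (hd₀ : ∀ k ∈ Finset.Icc 1 n, k ≠ khat → d k = 0)
    (hfix : f =ᵐ[volume.restrict (Icc 0 1)] simOp n a d β f) (L : ℝ) :
    ∀ᵐ x, x ∈ Icc 0 1 \ Icc (alphaOf a khat) (alphaOf a (khat + 1)) →
      |f x - L| ≤ ∑ k ∈ Finset.Icc 1 n, |β k| + |L| := by
  filter_upwards [(ae_restrict_iff' measurableSet_Icc).mp hfix, ae_exists_mem_Ioo_alphaOf hsum]
    with x hfx hx ⟨hx₀₁, hxk⟩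
  obtain ⟨j, hj, hxj⟩ := hx hx₀₁
  have hjk : j ≠ khat := by
    rintro rfl
    exact hxk (Ioo_subset_Icc_self hxj)
  rw [hfx hx₀₁, simOp_eq_of_mem_Ioo ha hj hxj, hd₀ j hj hjk, zero_mul, add_zero]
  have hβj : |β j| ≤ ∑ k ∈ Finset.Icc 1 n, |β k| :=
    Finset.single_le_sum (fun k _ => abs_nonneg (β k)) hj
  linarith [abs_sub (β j) L]

lemma ae_sub_eq_mul_sub_of_mem_Icc_alphaOf (ha : ∀ k ∈ Finset.Icc 1 n, 0 < a k)
    (hsum : ∑ k ∈ Finset.Icc 1 n, a k = 1) {khat : ℕ} (hk : khat ∈ Finset.Icc 1 n)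
    (hfix : f =ᵐ[volume.restrict (Icc 0 1)] simOp n a d β f) {L : ℝ}
    (hL : β khat + d khat * L = L) :
    ∀ᵐ x, x ∈ Icc (alphaOf a khat) (alphaOf a (khat + 1)) →
      f x - L = d khat * (f ((x - alphaOf a khat) / a khat) - L) := by
  obtain ⟨hk₁, hkn⟩ := Finset.mem_Icc.mp hk
  filter_upwards [(ae_restrict_iff' measurableSet_Icc).mp hfix,
    (Ioo_ae_eq_Icc (μ := volume)).mem_iff] with x hfx hIoo hx
  have hx₀₁ : x ∈ Icc 0 1 := Icc_subset_Icc (alphaOf_mem_Icc ha hsum hk₁ (by omega)).1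
    (alphaOf_mem_Icc ha hsum (by omega) (by omega)).2 hx
  rw [hfx hx₀₁, simOp_eq_of_mem_Ioo ha hk (hIoo.mpr hx)]
  linear_combination hL

end SimilarityOperator

theorem selfSimilar_zeroOrder_essBounded_and_essLimit_general
    (n : ℕ) (hn : 1 < n) (a d β : ℕ → ℝ)
    (ha : ∀ k ∈ Finset.Icc 1 n, 0 < a k)
    (hsum : ∑ k ∈ Finset.Icc 1 n, a k = 1)
    (khat : ℕ) (hk : khat ∈ Finset.Icc 1 n)
    (hd0 : ∀ k ∈ Finset.Icc 1 n, k ≠ khat → d k = 0)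
    (f : ℝ → ℝ)
    (hfix : f =ᵐ[volume.restrict (Set.Icc (0:ℝ) 1)] simOp n a d β f)
    (hdlt : |d khat| < 1)
    (xhat : ℝ) (hxhat : xhat = alphaOf a khat / (1 - a khat)) :
    (∃ C : ℝ, ∀ᵐ x ∂(volume.restrict (Set.Icc (0:ℝ) 1)), |f x| ≤ C) ∧
    (∀ ε > (0:ℝ), ∃ δ > (0:ℝ), ∀ᵐ x ∂(volume.restrict (Set.Icc (0:ℝ) 1)),
      (0 < |x - xhat| ∧ |x - xhat| < δ) → |f x - β khat / (1 - d khat)| < ε) := by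
  obtain ⟨hk₁, hkn⟩ := Finset.mem_Icc.mp hk
  set A := a khat
  set L := β khat / (1 - d khat) with hL_def
  have hA₀ : 0 < A := ha khat hk
  have hA₁ : A < 1 := lt_one_of_sum_eq_one hn ha hsum hk
  have hα : alphaOf a khat = xhat * (1 - A) := by
    rw [hxhat, div_mul_cancel₀ _ (by linarith)]
  have hblock := Icc_alphaOf_eq_nestedIcc hk₁ hα
  have hxhat₀₁ : xhat ∈ Icc 0 1 := by
    have h₀ := (alphaOf_mem_Icc ha hsum hk₁ (by omega)).1
    have h₁ := (alphaOf_mem_Icc ha hsum (j := khat + 1) (by omega) (by omega)).2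
    rw [alphaOf_succ hk₁, hα] at h₁
    rw [hα] at h₀
    constructor <;> nlinarith
  have hL : β khat + d khat * L = L := by
    have : 1 - d khat ≠ 0 := by linarith [le_abs_self (d khat)]
    rw [hL_def]
    field_simp
    ring
  have hg := ae_abs_le_of_mem_nestedIcc (g := fun x => f x - L) hA₀ hA₁ hxhat₀₁ hdlt.le
    (by positivity) (hblock ▸ ae_abs_sub_le_of_notMem_Icc_alphaOf ha hsum hd0 hfix L)
    (hblock ▸ hα ▸ ae_sub_eq_mul_sub_of_mem_Icc_alphaOf ha hsum hk hfix hL)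
  refine ⟨⟨∑ k ∈ Finset.Icc 1 n, |β k| + |L| + |L|, ?_⟩,
    essLimit_eq_zero_of_mem_nestedIcc hA₀ hxhat₀₁ hdlt hg⟩
  filter_upwards [ae_restrict_Icc_abs_le_of_mem_nestedIcc hg] with x hx
  linarith [abs_sub_abs_le_abs_sub (f x) L]

/-- if `|d_{k̂}| < 1`, the self-similar function of zero spectral order is
essentially bounded on `[0,1]` and has essential limit `β_{k̂}/(1 − d_{k̂})` at the
singular point `x̂`. -/
theorem selfSimilar_zeroOrder_essBounded_and_essLimit
    (n : ℕ) (hn : 1 < n) (a d β : ℕ → ℝ)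
    (ha : ∀ k ∈ Finset.Icc 1 n, 0 < a k)
    (hsum : ∑ k ∈ Finset.Icc 1 n, a k = 1)
    (p : ℝ≥0∞) (hp1 : 1 ≤ p) (hpt : p ≠ ⊤)
    (khat : ℕ) (hk : khat ∈ Finset.Icc 1 n)
    (hdk : d khat ≠ 0)
    (hd0 : ∀ k ∈ Finset.Icc 1 n, k ≠ khat → d k = 0)
    (hβ : ∃ k ∈ Finset.Icc 1 n, β k ≠ 0)
    (hcontr : a khat * |d khat| ^ p.toReal < 1)
    (f : ℝ → ℝ) (hf : MemLp f p (volume.restrict (Set.Icc (0:ℝ) 1)))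
    (hfix : f =ᵐ[volume.restrict (Set.Icc (0:ℝ) 1)] simOp n a d β f)
    (hdlt : |d khat| < 1)
    (xhat : ℝ) (hxhat : xhat = alphaOf a khat / (1 - a khat)) :
    (∃ C : ℝ, ∀ᵐ x ∂(volume.restrict (Set.Icc (0:ℝ) 1)), |f x| ≤ C) ∧
    (∀ ε > (0:ℝ), ∃ δ > (0:ℝ), ∀ᵐ x ∂(volume.restrict (Set.Icc (0:ℝ) 1)),
      (0 < |x - xhat| ∧ |x - xhat| < δ) → |f x - β khat / (1 - d khat)| < ε) :=
  selfSimilar_zeroOrder_essBounded_and_essLimit_general n hn a d β ha hsum khat hk hd0 f hfix hdlt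
    xhat hxhat
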